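/- Let d ≥ 1, σ > 2, δ ∈ (0,1/2] and θ₂ > 0. There exists a constant C₀ > 0, depending only on d, σ, δ and θ₂, such that for all t ≥ 0 and all k, ℓ ∈ ℤ^d ∖ {0}: ∫₀^t (t−s) e^{−(θ₂/2)|k|(t−s)/⟨t⟩^{δ}} · min{⟨ℓ,ℓs⟩, ⟨k−ℓ, kt−ℓs⟩}^{−σ} ds ≤ C₀ |k|^{−2}. -/

import Mathlib

open MeasureTheory
open scoped ENNReal

noncomputable section

/-- `ℝ^d` with the Euclidean norm. -/
abbrev Ed (d : ℕ) := EuclideanSpace ℝ (Fin d)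

/-- Embedding of `ℤ^d` into `ℝ^d`. -/
def toE {d : ℕ} (k : Fin d → ℤ) : Ed d := WithLp.toLp 2 (fun i => (k i : ℝ))

/-- Japanese bracket of a scalar: `⟨u⟩ = (1+u²)^{1/2}`. -/
def jap (u : ℝ) : ℝ := Real.sqrt (1 + u ^ 2)

/-- Japanese bracket of a vector: `⟨η⟩ = (1+|η|²)^{1/2}`. -/
def japV {d : ℕ} (η : Ed d) : ℝ := Real.sqrt (1 + ‖η‖ ^ 2)

/-- Joint bracket `⟨k,η⟩ = (1+|k|²+|η|²)^{1/2}`. -/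
def japKV {d : ℕ} (k : Fin d → ℤ) (η : Ed d) : ℝ := Real.sqrt (1 + ‖toE k‖ ^ 2 + ‖η‖ ^ 2)

/-- The analytic weight `A_{k,η}(z) = e^{z⟨k,η⟩} ⟨η⟩^σ`. -/
def wA (d : ℕ) (σ z : ℝ) (k : Fin d → ℤ) (η : Ed d) : ℝ :=
  Real.exp (z * japKV k η) * japV η ^ σ

/-!
Let `a = θ₂|k|/(2⟨t⟩^δ)`; since `δ ≤ 1/2`, `a ≥ θ₂/(2⟨t⟩^{1/2})` and `1/a² ≤ 4⟨t⟩/(θ₂|k|)²`.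
The weight `(t-s)e^{-a(t-s)}` turns a bound `e^{-a(t-s)/4} g(s) ≤ M` on `[0,t]` into
`∫₀^t (t-s)e^{-a(t-s)} g ≤ 8M/a²`, so it suffices to get `M ≲ 1/⟨t⟩` for `g = min{…}^{-σ}`.
The first bracket is `≥ ⟨s⟩`, and `e^{-a(t-s)/4}⟨s⟩^{-2} ≲ 1/⟨t⟩` (split at `s = t/2`, using that
`⟨t⟩ e^{-ct/⟨t⟩^{1/2}}` is bounded). For `ℓ ≠ k` the second bracket is `≥ ⟨s⟩/2` unless
`t ≤ 3|k|(t-s)`, and then the exponential alone is `≲ 1/⟨t⟩`. In the resonant mode `ℓ = k` the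
second bracket is `⟨|k|(t-s)⟩`; its contribution is integrated exactly, with
`∫₀^∞ u⟨|k|u⟩^{-σ} du = 1/((σ-2)|k|²)`.
-/

open Real Set

section Brackets

variable {d : ℕ}

lemma one_le_jap (t : ℝ) : 1 ≤ jap t :=
  one_le_sqrt.mpr (by nlinarith [sq_nonneg t])

lemma jap_pos (t : ℝ) : 0 < jap t :=
  zero_lt_one.trans_le (one_le_jap t)

lemma jap_sq (t : ℝ) : jap t ^ 2 = 1 + t ^ 2 :=
  sq_sqrt (by positivity)

lemma jap_le_one_add {t : ℝ} (ht : 0 ≤ t) : jap t ≤ 1 + t :=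
  (sqrt_le_left (by positivity)).mpr (by nlinarith)

lemma jap_rpow_sq_le {δ : ℝ} (hδ : δ ≤ 1 / 2) (t : ℝ) : (jap t ^ δ) ^ 2 ≤ jap t := by
  rw [← rpow_natCast, ← rpow_mul (jap_pos t).le]
  simpa using rpow_le_rpow_of_exponent_le (one_le_jap t) (by push_cast; linarith : δ * (2 : ℕ) ≤ 1)

lemma one_le_japKV (k : Fin d → ℤ) (η : Ed d) : 1 ≤ japKV k η :=
  one_le_sqrt.mpr (by nlinarith [sq_nonneg ‖toE k‖, sq_nonneg ‖η‖])

lemma japKV_sq (k : Fin d → ℤ) (η : Ed d) : japKV k η ^ 2 = 1 + ‖toE k‖ ^ 2 + ‖η‖ ^ 2 :=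
  sq_sqrt (by positivity)

@[fun_prop]
lemma continuous_jap : Continuous jap := by
  unfold jap; fun_prop

@[fun_prop]
lemma continuous_japKV (k : Fin d → ℤ) : Continuous (japKV k) := by
  unfold japKV; fun_prop

lemma toE_sub (k ℓ : Fin d → ℤ) : toE (k - ℓ) = toE k - toE ℓ := by
  ext i; simp [toE]

lemma toE_zero : toE (0 : Fin d → ℤ) = 0 := by
  ext i; simp [toE]

lemma one_le_norm_toE {k : Fin d → ℤ} (hk : k ≠ 0) : 1 ≤ ‖toE k‖ := by
  obtain ⟨i, hi⟩ := Function.ne_iff.mp hk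
  have hki : (1 : ℝ) ≤ |(k i : ℝ)| := by exact_mod_cast Int.one_le_abs hi
  calc (1 : ℝ) ≤ ‖toE k i‖ := by simpa [toE] using hki
    _ ≤ ‖toE k‖ := PiLp.norm_apply_le (toE k) i

lemma jap_le_japKV_smul {ℓ : Fin d → ℤ} (hℓ : ℓ ≠ 0) (s : ℝ) : jap s ≤ japKV ℓ (s • toE ℓ) := by
  refine sqrt_le_sqrt ?_
  rw [norm_smul, mul_pow, norm_eq_abs, sq_abs]
  nlinarith [le_mul_of_one_le_right (sq_nonneg s) (one_le_pow₀ (n := 2) (one_le_norm_toE hℓ))]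

lemma japKV_sub_self (k : Fin d → ℤ) (s t : ℝ) :
    japKV (k - k) (t • toE k - s • toE k) = jap ((t - s) * ‖toE k‖) := by
  rw [japKV, jap, sub_self, toE_zero, ← sub_smul, norm_smul, norm_zero, norm_eq_abs, mul_pow,
    mul_pow, sq_abs]
  ring_nf

lemma le_three_mul_or_jap_le_two_mul_japKV {k ℓ : Fin d → ℤ} {s t : ℝ} (hk : k ≠ 0)
    (hkℓ : k ≠ ℓ) (hs : s ∈ Icc 0 t) :
    t ≤ 3 * ‖toE k‖ * (t - s) ∨ jap s ≤ 2 * japKV (k - ℓ) (t • toE k - s • toE ℓ) := by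
  have hK := one_le_norm_toE hk
  have hn := one_le_norm_toE (sub_ne_zero.mpr hkℓ)
  have hts : 0 ≤ t - s := by linarith [hs.2]
  rcases le_or_gt (s * ‖toE (k - ℓ)‖) (2 * ‖toE k‖ * (t - s)) with hfar | hnear
  · left
    nlinarith [hs.1]
  · right
    have hsplit : t • toE k - s • toE ℓ = (t - s) • toE k + s • toE (k - ℓ) := by
      rw [toE_sub]; module
    have hlow : s / 2 ≤ ‖t • toE k - s • toE ℓ‖ := by
      have htri := norm_sub_le ((t - s) • toE k + s • toE (k - ℓ)) ((t - s) • toE k)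
      rw [add_sub_cancel_left, norm_smul, norm_smul, norm_of_nonneg hs.1, norm_of_nonneg hts]
        at htri
      rw [hsplit]
      nlinarith [hs.1]
    refine sqrt_le_left (by linarith [one_le_japKV (k - ℓ) (t • toE k - s • toE ℓ)]) |>.mpr ?_
    rw [mul_pow, japKV_sq]
    nlinarith [sq_nonneg ‖toE (k - ℓ)‖, mul_self_le_mul_self (by linarith [hs.1]) hlow]

end Brackets

lemma rpow_neg_le_inv_sq {σ y : ℝ} (hσ : 2 ≤ σ) (hy : 1 ≤ y) : y ^ (-σ) ≤ (y ^ 2)⁻¹ := by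
  rw [← rpow_natCast, ← rpow_neg (by linarith)]
  exact rpow_le_rpow_of_exponent_le hy (by push_cast; linarith)

lemma mul_mul_min_rpow_neg_le {u e x y σ : ℝ} (hu : 0 ≤ u) (he : e ∈ Icc 0 1) (hx : 0 < x)
    (hy : 0 < y) : u * e * min x y ^ (-σ) ≤ u * e * x ^ (-σ) + u * y ^ (-σ) := by
  have hxσ := rpow_nonneg hx.le (-σ)
  have hyσ := rpow_nonneg hy.le (-σ)
  rcases min_choice x y with h | h <;> rw [h]
  · nlinarith [mul_nonneg hu hyσ]
  · nlinarith [mul_le_mul_of_nonneg_right (mul_le_of_le_one_right hu he.2) hyσ,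
      mul_nonneg (mul_nonneg hu he.1) hxσ]

lemma sq_mul_exp_neg_le {c y : ℝ} (hc : 0 < c) (hy : 0 ≤ y) :
    y ^ 2 * exp (-(c * y)) ≤ 2 / c ^ 2 := by
  have h := pow_div_factorial_le_exp (x := c * y) (mul_nonneg hc.le hy) 2
  rw [exp_neg, ← div_eq_mul_inv, div_le_div_iff₀ (exp_pos _) (by positivity)]
  norm_num [Nat.factorial] at h
  nlinarith

lemma jap_mul_exp_neg_le {c t x : ℝ} (hc : 0 < c) (ht : 0 ≤ t) (hx : c * t / √(jap t) ≤ x) :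
    jap t * exp (-x) ≤ 2 * exp c / c ^ 2 := by
  set y := √(jap t)
  have hjt := one_le_jap t
  have hy1 : 1 ≤ y := one_le_sqrt.mpr hjt
  have hy2 : y ^ 2 = jap t := sq_sqrt (by linarith)
  -- `y ^ 2 ≤ 1 + t` turns the hypothesis into `c * (y - 1) ≤ x`
  have hyx : c * y - c ≤ x := by
    refine le_trans ?_ hx
    rw [le_div_iff₀ (by linarith)]
    nlinarith [jap_le_one_add ht]
  calc jap t * exp (-x) ≤ y ^ 2 * (exp (-(c * y)) * exp c) := by
        rw [hy2, ← exp_add]; gcongr; linarith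
    _ = y ^ 2 * exp (-(c * y)) * exp c := by ring
    _ ≤ 2 / c ^ 2 * exp c := by gcongr; exact sq_mul_exp_neg_le hc (by linarith)
    _ = 2 * exp c / c ^ 2 := by ring

lemma exp_neg_mul_inv_jap_sq_le {c s t x : ℝ} (hc : 0 < c) (hs : s ∈ Icc 0 t)
    (hx : 2 * c * (t - s) / √(jap t) ≤ x) :
    exp (-x) * (jap s ^ 2)⁻¹ ≤ (2 * exp c / c ^ 2 + 4) / jap t := by
  have hjt := one_le_jap t
  have hjs := one_le_jap s
  have hD : 0 ≤ 2 * exp c / c ^ 2 := by positivity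
  have hx0 : 0 ≤ x := le_trans (div_nonneg (by nlinarith [hs.2]) (sqrt_nonneg _)) hx
  rw [le_div_iff₀ (by linarith)]
  rcases le_total s (t / 2) with hst | hst
  · have hdecay : jap t * exp (-x) ≤ 2 * exp c / c ^ 2 := by
      refine jap_mul_exp_neg_le hc (hs.1.trans hs.2) (le_trans ?_ hx)
      exact div_le_div_of_nonneg_right (by nlinarith) (sqrt_nonneg _)
    calc exp (-x) * (jap s ^ 2)⁻¹ * jap t = jap t * exp (-x) * (jap s ^ 2)⁻¹ := by ring
      _ ≤ 2 * exp c / c ^ 2 * 1 :=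
          mul_le_mul hdecay (inv_le_one_of_one_le₀ (one_le_pow₀ hjs)) (by positivity) hD
      _ ≤ 2 * exp c / c ^ 2 + 4 := by linarith
  · have hjt4 : jap t ≤ 4 * jap s ^ 2 := by
      have : jap t ≤ jap t ^ 2 := by nlinarith
      nlinarith [jap_sq t, jap_sq s,
        mul_self_le_mul_self (hs.1.trans hs.2) (by linarith : t ≤ 2 * s)]
    calc exp (-x) * (jap s ^ 2)⁻¹ * jap t ≤ 1 * (jap s ^ 2)⁻¹ * (4 * jap s ^ 2) := by
          gcongr; exact exp_le_one_iff.mpr (by linarith)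
      _ = 4 := by field_simp
      _ ≤ 2 * exp c / c ^ 2 + 4 := by linarith

lemma mul_sub_div_sqrt_jap_le {a b s t : ℝ} (h : 4 * b ≤ a * √(jap t)) (hs : s ≤ t) :
    b * (t - s) / √(jap t) ≤ a * (t - s) / 4 := by
  rw [div_le_iff₀ (sqrt_pos.mpr (jap_pos t))]
  nlinarith [mul_le_mul_of_nonneg_right h (sub_nonneg.mpr hs)]

lemma integral_exp_neg_mul_sub_le {b t : ℝ} (hb : 0 < b) :
    ∫ s in (0:ℝ)..t, exp (-(b * (t - s))) ≤ 1 / b := by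
  have hint : ∫ s in (0:ℝ)..t, exp (-(b * (t - s))) = (1 - exp (-(b * t))) / b := by
    rw [intervalIntegral.integral_comp_sub_left (fun u => exp (-(b * u)))]
    simp [intervalIntegral.integral_comp_mul_left (fun u => exp (-u)) hb.ne', integral_exp,
      div_eq_inv_mul]
  rw [hint]
  exact div_le_div_of_nonneg_right (by linarith [exp_pos (-(b * t))]) hb.le

lemma integral_sub_mul_exp_mul_le {a t M : ℝ} {g : ℝ → ℝ} (ha : 0 < a) (ht : 0 ≤ t)
    (hg : Continuous g) (hg0 : ∀ s ∈ Icc 0 t, 0 ≤ g s)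
    (hM : ∀ s ∈ Icc 0 t, exp (-(a * (t - s) / 4)) * g s ≤ M) :
    ∫ s in (0:ℝ)..t, (t - s) * exp (-(a * (t - s))) * g s ≤ 8 * M / a ^ 2 := by
  have hM0 : 0 ≤ M := by
    simpa using (mul_nonneg (exp_pos _).le (hg0 t ⟨ht, le_rfl⟩)).trans (hM t ⟨ht, le_rfl⟩)
  -- of `exp (-a u) = exp (-a u / 2) exp (-a u / 4) exp (-a u / 4)`, the first factor absorbs the
  -- weight `u`, the second is integrated and the third pairs with `g`
  have hpt : ∀ s ∈ Icc 0 t,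
      (t - s) * exp (-(a * (t - s))) * g s ≤ 2 * M / a * exp (-(a / 4 * (t - s))) := by
    intro s hs
    set u := t - s
    have hu : 0 ≤ u := by linarith [hs.2]
    have hlin : u * exp (-(a * u / 2)) ≤ 2 / a := by
      rw [exp_neg, ← div_eq_mul_inv, div_le_div_iff₀ (exp_pos _) ha]
      nlinarith [add_one_le_exp (a * u / 2), exp_pos (a * u / 2)]
    have hsplit :
        exp (-(a * u)) = exp (-(a * u / 2)) * exp (-(a / 4 * u)) * exp (-(a * u / 4)) := by
      rw [← exp_add, ← exp_add]; ring_nf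
    calc u * exp (-(a * u)) * g s
        = u * exp (-(a * u / 2)) * exp (-(a / 4 * u)) * (exp (-(a * u / 4)) * g s) := by
          rw [hsplit]; ring
      _ ≤ 2 / a * exp (-(a / 4 * u)) * M := by
          gcongr
          · exact mul_nonneg (exp_pos _).le (hg0 s hs)
          · exact hM s hs
      _ = 2 * M / a * exp (-(a / 4 * (t - s))) := by ring
  have hcont : Continuous fun s => (t - s) * exp (-(a * (t - s))) := by fun_prop
  calc ∫ s in (0:ℝ)..t, (t - s) * exp (-(a * (t - s))) * g s
      ≤ ∫ s in (0:ℝ)..t, 2 * M / a * exp (-(a / 4 * (t - s))) :=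
        intervalIntegral.integral_mono_on ht ((hcont.mul hg).intervalIntegrable _ _)
          (Continuous.intervalIntegrable (by fun_prop) _ _) hpt
    _ = 2 * M / a * ∫ s in (0:ℝ)..t, exp (-(a / 4 * (t - s))) :=
        intervalIntegral.integral_const_mul _ _
    _ ≤ 2 * M / a * (1 / (a / 4)) := by
        gcongr; exact integral_exp_neg_mul_sub_le (by positivity)
    _ = 8 * M / a ^ 2 := by field_simp; ring

lemma integral_mul_one_add_mul_sq_rpow_neg_le {b q t : ℝ} (hb : 0 < b) (hq : 1 < q) :
    ∫ u in (0:ℝ)..t, u * (1 + b * u ^ 2) ^ (-q) ≤ 1 / (2 * (q - 1) * b) := by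
  have hden : 0 < 2 * (q - 1) * b := by nlinarith
  have hderiv : ∀ u ∈ uIcc 0 t,
      HasDerivAt (fun u => -(1 + b * u ^ 2) ^ (1 - q) / (2 * (q - 1) * b))
        (u * (1 + b * u ^ 2) ^ (-q)) u := by
    intro u _
    have hpos : 0 < 1 + b * u ^ 2 := by positivity
    have h := (((hasDerivAt_pow 2 u).const_mul b).const_add 1).rpow_const (p := 1 - q)
      (Or.inl hpos.ne')
    refine (h.neg.div_const _).congr_deriv ?_
    have hq1 : q - 1 ≠ 0 := by linarith
    rw [show 1 - q - 1 = -q by ring]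
    field_simp
    push_cast
    ring
  have hcont : Continuous fun u : ℝ => u * (1 + b * u ^ 2) ^ (-q) :=
    continuous_id.mul ((by fun_prop : Continuous fun u : ℝ => 1 + b * u ^ 2).rpow_const
      fun u => Or.inl (by positivity))
  rw [intervalIntegral.integral_eq_sub_of_hasDerivAt hderiv (hcont.intervalIntegrable _ _)]
  calc _ = (1 - (1 + b * t ^ 2) ^ (1 - q)) / (2 * (q - 1) * b) := by simp; ring
    _ ≤ 1 / (2 * (q - 1) * b) := by
        gcongr
        linarith [rpow_nonneg (by positivity : 0 ≤ 1 + b * t ^ 2) (1 - q)]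

lemma integral_sub_mul_jap_mul_rpow_neg_le {K σ t : ℝ} (hK : 0 < K) (hσ : 2 < σ) :
    ∫ s in (0:ℝ)..t, (t - s) * jap ((t - s) * K) ^ (-σ) ≤ 1 / ((σ - 2) * K ^ 2) := by
  have hjap : ∀ u : ℝ, jap (u * K) ^ (-σ) = (1 + K ^ 2 * u ^ 2) ^ (-(σ / 2)) := by
    intro u
    rw [jap, sqrt_eq_rpow, ← rpow_mul (by positivity)]
    ring_nf
  simp_rw [hjap]
  rw [intervalIntegral.integral_comp_sub_left (fun u => u * (1 + K ^ 2 * u ^ 2) ^ (-(σ / 2))),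
    sub_self, sub_zero]
  convert integral_mul_one_add_mul_sq_rpow_neg_le (pow_pos hK 2) (by linarith : 1 < σ / 2)
    using 2
  ring

section Echo

variable {d : ℕ} {k ℓ : Fin d → ℤ} {σ c a s t : ℝ}

lemma exp_neg_mul_japKV_smul_rpow_neg_le (hσ : 2 ≤ σ) (hc : 0 < c) (hℓ : ℓ ≠ 0)
    (hs : s ∈ Icc 0 t) (ha : 8 * c ≤ a * √(jap t)) :
    exp (-(a * (t - s) / 4)) * japKV ℓ (s • toE ℓ) ^ (-σ) ≤ (2 * exp c / c ^ 2 + 4) / jap t := by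
  refine le_trans ?_
    (exp_neg_mul_inv_jap_sq_le hc hs (mul_sub_div_sqrt_jap_le (a := a) (by linarith) hs.2))
  gcongr
  calc japKV ℓ (s • toE ℓ) ^ (-σ) ≤ (japKV ℓ (s • toE ℓ) ^ 2)⁻¹ :=
        rpow_neg_le_inv_sq hσ (one_le_japKV _ _)
    _ ≤ (jap s ^ 2)⁻¹ :=
        inv_anti₀ (pow_pos (jap_pos s) 2)
          (pow_le_pow_left₀ (jap_pos s).le (jap_le_japKV_smul hℓ s) 2)

lemma exp_neg_mul_japKV_sub_rpow_neg_le (hσ : 2 ≤ σ) (hc : 0 < c) (hk : k ≠ 0) (hkℓ : k ≠ ℓ)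
    (hs : s ∈ Icc 0 t) (ha : 12 * c * ‖toE k‖ ≤ a * √(jap t)) :
    exp (-(a * (t - s) / 4)) * japKV (k - ℓ) (t • toE k - s • toE ℓ) ^ (-σ) ≤
      4 * (2 * exp c / c ^ 2 + 4) / jap t := by
  set B := japKV (k - ℓ) (t • toE k - s • toE ℓ)
  have hK := one_le_norm_toE hk
  have hB : 1 ≤ B := one_le_japKV _ _
  have hts : 0 ≤ t - s := by linarith [hs.2]
  have hx := mul_sub_div_sqrt_jap_le (a := a) (b := 3 * c * ‖toE k‖) (by linarith) hs.2
  have hD : 0 ≤ 2 * exp c / c ^ 2 := by positivity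
  rcases le_three_mul_or_jap_le_two_mul_japKV hk hkℓ hs with hfar | hnear
  · have hdecay : jap t * exp (-(a * (t - s) / 4)) ≤ 2 * exp c / c ^ 2 := by
      refine jap_mul_exp_neg_le hc (hs.1.trans hs.2) (le_trans ?_ hx)
      exact div_le_div_of_nonneg_right (by nlinarith) (sqrt_nonneg _)
    rw [le_div_iff₀ (jap_pos t)]
    calc exp (-(a * (t - s) / 4)) * B ^ (-σ) * jap t
        = jap t * exp (-(a * (t - s) / 4)) * B ^ (-σ) := by ring
      _ ≤ 2 * exp c / c ^ 2 * 1 :=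
          mul_le_mul hdecay (rpow_le_one_of_one_le_of_nonpos hB (by linarith))
            (rpow_nonneg (by linarith) _) hD
      _ ≤ 4 * (2 * exp c / c ^ 2 + 4) := by linarith
  · have hBs : B ^ (-σ) ≤ 4 * (jap s ^ 2)⁻¹ := by
      refine (rpow_neg_le_inv_sq hσ hB).trans ?_
      rw [← div_eq_mul_inv, le_div_iff₀ (pow_pos (jap_pos s) 2), inv_mul_le_iff₀ (by positivity)]
      nlinarith [jap_pos s]
    have hcore := exp_neg_mul_inv_jap_sq_le hc hs (le_trans
      (div_le_div_of_nonneg_right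
        (by nlinarith [mul_nonneg (mul_nonneg hc.le hts) (sub_nonneg.mpr hK)]) (sqrt_nonneg _))
      hx)
    calc exp (-(a * (t - s) / 4)) * B ^ (-σ) ≤ 4 * (exp (-(a * (t - s) / 4)) * (jap s ^ 2)⁻¹) := by
          nlinarith [exp_pos (-(a * (t - s) / 4))]
      _ ≤ 4 * (2 * exp c / c ^ 2 + 4) / jap t := by
          rw [mul_div_assoc (4 : ℝ)]; exact mul_le_mul_of_nonneg_left hcore (by norm_num)

lemma integral_echo_self_le (hσ : 2 < σ) (hc : 0 < c) (ht : 0 ≤ t) (hk : k ≠ 0)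
    (ha : 8 * c ≤ a * √(jap t)) :
    ∫ s in (0:ℝ)..t, (t - s) * exp (-(a * (t - s))) *
        min (japKV k (s • toE k)) (japKV (k - k) (t • toE k - s • toE k)) ^ (-σ) ≤
      8 * ((2 * exp c / c ^ 2 + 4) / jap t) / a ^ 2 + 1 / ((σ - 2) * ‖toE k‖ ^ 2) := by
  have ha0 : 0 < a := pos_of_mul_pos_left ((by positivity : 0 < 8 * c).trans_le ha) (sqrt_nonneg _)
  have hA : ∀ s : ℝ, 0 < japKV k (s • toE k) := fun s => zero_lt_one.trans_le (one_le_japKV _ _)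
  have hcontE : Continuous fun s : ℝ => (t - s) * exp (-(a * (t - s))) := by fun_prop
  have hcontA : Continuous fun s : ℝ => japKV k (s • toE k) ^ (-σ) :=
    (by fun_prop : Continuous fun s : ℝ => japKV k (s • toE k)).rpow_const
      fun s => Or.inl (hA s).ne'
  have hcontB : Continuous fun s : ℝ => (t - s) * jap ((t - s) * ‖toE k‖) ^ (-σ) :=
    (continuous_sub_left t).mul
      ((by fun_prop : Continuous fun s : ℝ => jap ((t - s) * ‖toE k‖)).rpow_const
        fun s => Or.inl (jap_pos _).ne')
  have hcontMin : Continuous fun s : ℝ =>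
      min (japKV k (s • toE k)) (jap ((t - s) * ‖toE k‖)) ^ (-σ) :=
    (by fun_prop : Continuous fun s : ℝ =>
      min (japKV k (s • toE k)) (jap ((t - s) * ‖toE k‖))).rpow_const
        fun s => Or.inl (lt_min (hA s) (jap_pos _)).ne'
  simp_rw [japKV_sub_self]
  calc _ ≤ ∫ s in (0:ℝ)..t, ((t - s) * exp (-(a * (t - s))) * japKV k (s • toE k) ^ (-σ) +
        (t - s) * jap ((t - s) * ‖toE k‖) ^ (-σ)) := by
        refine intervalIntegral.integral_mono_on ht ((hcontE.mul hcontMin).intervalIntegrable _ _)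
          (((hcontE.mul hcontA).add hcontB).intervalIntegrable _ _) fun s hs => ?_
        have hts : 0 ≤ t - s := by linarith [hs.2]
        exact mul_mul_min_rpow_neg_le hts ⟨(exp_pos _).le, exp_le_one_iff.mpr (by nlinarith)⟩
          (hA s) (jap_pos _)
    _ = (∫ s in (0:ℝ)..t, (t - s) * exp (-(a * (t - s))) * japKV k (s • toE k) ^ (-σ)) +
        ∫ s in (0:ℝ)..t, (t - s) * jap ((t - s) * ‖toE k‖) ^ (-σ) :=
        intervalIntegral.integral_add ((hcontE.mul hcontA).intervalIntegrable _ _)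
          (hcontB.intervalIntegrable _ _)
    _ ≤ _ :=
        add_le_add
          (integral_sub_mul_exp_mul_le ha0 ht hcontA (fun s _ => (rpow_pos_of_pos (hA s) _).le)
            fun s hs => exp_neg_mul_japKV_smul_rpow_neg_le hσ.le hc hk hs ha)
          (integral_sub_mul_jap_mul_rpow_neg_le (zero_lt_one.trans_le (one_le_norm_toE hk)) hσ)

lemma integral_echo_le_of_ne (hσ : 2 ≤ σ) (hc : 0 < c) (ht : 0 ≤ t) (hk : k ≠ 0) (hℓ : ℓ ≠ 0)
    (hkℓ : k ≠ ℓ) (ha : 12 * c * ‖toE k‖ ≤ a * √(jap t)) :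
    ∫ s in (0:ℝ)..t, (t - s) * exp (-(a * (t - s))) *
        min (japKV ℓ (s • toE ℓ)) (japKV (k - ℓ) (t • toE k - s • toE ℓ)) ^ (-σ) ≤
      8 * (4 * (2 * exp c / c ^ 2 + 4) / jap t) / a ^ 2 := by
  have hK := one_le_norm_toE hk
  have ha0 : 0 < a := pos_of_mul_pos_left
    ((mul_pos (by positivity) (zero_lt_one.trans_le hK)).trans_le ha) (sqrt_nonneg _)
  have hmin : ∀ s : ℝ, 1 ≤ min (japKV ℓ (s • toE ℓ)) (japKV (k - ℓ) (t • toE k - s • toE ℓ)) :=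
    fun s => le_min (one_le_japKV _ _) (one_le_japKV _ _)
  refine integral_sub_mul_exp_mul_le ha0 ht
    ((by fun_prop : Continuous fun s : ℝ =>
      min (japKV ℓ (s • toE ℓ)) (japKV (k - ℓ) (t • toE k - s • toE ℓ))).rpow_const
        fun s => Or.inl (zero_lt_one.trans_le (hmin s)).ne')
    (fun s _ => rpow_nonneg (zero_le_one.trans (hmin s)) _) fun s hs => ?_
  rcases min_choice (japKV ℓ (s • toE ℓ)) (japKV (k - ℓ) (t • toE k - s • toE ℓ)) with h | h <;>
    rw [h]
  · refine (exp_neg_mul_japKV_smul_rpow_neg_le hσ hc hℓ hs (by nlinarith)).trans ?_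
    gcongr <;> linarith [jap_pos t, exp_pos c, show 0 ≤ 2 * exp c / c ^ 2 by positivity]
  · exact exp_neg_mul_japKV_sub_rpow_neg_le hσ hc hk hkℓ hs ha

lemma integral_echo_le (hσ : 2 < σ) (hc : 0 < c) (ht : 0 ≤ t) (hk : k ≠ 0) (hℓ : ℓ ≠ 0)
    (ha : 12 * c * ‖toE k‖ ≤ a * √(jap t)) :
    ∫ s in (0:ℝ)..t, (t - s) * exp (-(a * (t - s))) *
        min (japKV ℓ (s • toE ℓ)) (japKV (k - ℓ) (t • toE k - s • toE ℓ)) ^ (-σ) ≤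
      8 * (4 * (2 * exp c / c ^ 2 + 4) / jap t) / a ^ 2 + 1 / ((σ - 2) * ‖toE k‖ ^ 2) := by
  have hK := one_le_norm_toE hk
  have hσ2 : 0 < σ - 2 := by linarith
  by_cases hkℓ : k = ℓ
  · subst hkℓ
    refine (integral_echo_self_le hσ hc ht hk (by nlinarith)).trans ?_
    gcongr <;> linarith [jap_pos t, show 0 ≤ 2 * exp c / c ^ 2 by positivity]
  · exact le_add_of_le_of_nonneg (integral_echo_le_of_ne hσ.le hc ht hk hℓ hkℓ ha) (by positivity)

end Echo

theorem riesz_echo_integral_bound_general (d : ℕ) (σ δ θ₂ : ℝ)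
    (hσ : 2 < σ) (hδ1 : δ ≤ 1 / 2) (hθ : 0 < θ₂) :
    ∃ C₀ > (0:ℝ), ∀ t : ℝ, 0 ≤ t → ∀ k ℓ : Fin d → ℤ, k ≠ 0 → ℓ ≠ 0 →
      (∫ s in (0:ℝ)..t,
        (t - s) * Real.exp (-(θ₂ / 2) * ‖toE k‖ * (t - s) / jap t ^ δ) *
          min (japKV ℓ (s • toE ℓ)) (japKV (k - ℓ) (t • toE k - s • toE ℓ)) ^ (-σ)) ≤
      C₀ * (‖toE k‖ ^ 2)⁻¹ := by
  set D := 2 * exp (θ₂ / 24) / (θ₂ / 24) ^ 2 + 4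
  have hσ2 : 0 < σ - 2 := by linarith
  refine ⟨128 * D / θ₂ ^ 2 + 1 / (σ - 2), by positivity, fun t ht k ℓ hk hℓ => ?_⟩
  set K := ‖toE k‖
  set J := jap t ^ δ
  have hK : 0 < K := zero_lt_one.trans_le (one_le_norm_toE hk)
  have hJ : 0 < J := rpow_pos_of_pos (jap_pos t) δ
  have hJ2 : J ^ 2 ≤ jap t := jap_rpow_sq_le hδ1 t
  have hrate : 12 * (θ₂ / 24) * K ≤ θ₂ * K / (2 * J) * √(jap t) := by
    have hJsqrt : J ≤ √(jap t) := (le_sqrt hJ.le (jap_pos t).le).mpr hJ2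
    rw [div_mul_eq_mul_div, le_div_iff₀ (by positivity)]
    nlinarith [mul_pos hθ hK]
  have hexp : ∀ s, -(θ₂ / 2) * K * (t - s) / J = -(θ₂ * K / (2 * J) * (t - s)) := by
    intro s; field_simp
  simp_rw [hexp]
  refine (integral_echo_le hσ (by positivity) ht hk hℓ hrate).trans ?_
  have hfirst : 8 * (4 * D / jap t) / (θ₂ * K / (2 * J)) ^ 2 ≤ 128 * D / θ₂ ^ 2 * (K ^ 2)⁻¹ := by
    calc _ = 128 * D / θ₂ ^ 2 * (K ^ 2)⁻¹ * (J ^ 2 / jap t) := by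
          field_simp; ring
      _ ≤ 128 * D / θ₂ ^ 2 * (K ^ 2)⁻¹ * 1 := by
          gcongr; exact div_le_one_of_le₀ hJ2 (jap_pos t).le
      _ = _ := mul_one _
  calc _ ≤ 128 * D / θ₂ ^ 2 * (K ^ 2)⁻¹ + 1 / (σ - 2) * (K ^ 2)⁻¹ :=
        add_le_add hfirst (by rw [one_div, one_div, mul_inv])
    _ = _ := by ring

/-- the key echo-suppression integral for Vlasov–Riesz systems:
`∫₀^t (t-s) e^{-(θ₂/2)|k|(t-s)/⟨t⟩^δ} min{⟨ℓ,ℓs⟩,⟨k-ℓ,kt-ℓs⟩}^{-σ} ds ≤ C₀|k|^{-2}`. -/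
theorem riesz_echo_integral_bound (d : ℕ) (hd : 1 ≤ d) (σ δ θ₂ : ℝ)
    (hσ : 2 < σ) (hδ0 : 0 < δ) (hδ1 : δ ≤ 1 / 2) (hθ : 0 < θ₂) :
    ∃ C₀ > (0:ℝ), ∀ t : ℝ, 0 ≤ t → ∀ k ℓ : Fin d → ℤ, k ≠ 0 → ℓ ≠ 0 →
      (∫ s in (0:ℝ)..t,
        (t - s) * Real.exp (-(θ₂ / 2) * ‖toE k‖ * (t - s) / jap t ^ δ) *
          min (japKV ℓ (s • toE ℓ)) (japKV (k - ℓ) (t • toE k - s • toE ℓ)) ^ (-σ)) ≤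
      C₀ * (‖toE k‖ ^ 2)⁻¹ :=
  riesz_echo_integral_bound_general d σ δ θ₂ hσ hδ1 hθ
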